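/- arXiv:0811.1738 — 5 statements merged into one kernel-verified Lean document; each statement's English description precedes it below -/
import Mathlib

section
/- Let M(t) be the G×G matrix over ℤ[t] with entries M(t)_{x,y} = d(x·y⁻¹)·t − δ_{x,y}, and let N(t) be the matrix obtained from M(t) by replacing the column indexed by e with the column vector whose x-entry is −δ_{x,e}. Then, viewing polynomials as power series, det(M(t))·F_e(t) = det(N(t)) in ℤ[[t]]. -/
/-- `aCoef d n x` is the sum over all `n`-tuples `(y₁, …, yₙ)` of elements of `G`
with `y₁ ⋯ yₙ = x` of the products `d y₁ ⋯ d yₙ`. -/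
def aCoef {G : Type*} [Group G] [Fintype G] [DecidableEq G] (d : G → ℕ) (n : ℕ) (x : G) : ℕ :=
  ∑ y ∈ Finset.univ.filter (fun y : Fin n → G => (List.ofFn y).prod = x), ∏ i, d (y i)

/-- The generating power series `F_x(t) = Σ_{n ≥ 0} a_n(x) tⁿ ∈ ℤ[[t]]`. -/
def genSeries {G : Type*} [Group G] [Fintype G] [DecidableEq G] (d : G → ℕ) (x : G) :
    PowerSeries ℤ :=
  PowerSeries.mk fun n => (aCoef d n x : ℤ)

lemma aCoef_zero {G : Type*} [Group G] [Fintype G] [DecidableEq G] (d : G → ℕ) (x : G) :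
    aCoef d 0 x = if x = 1 then 1 else 0 := by
  unfold aCoef
  split_ifs with h <;> simp [h, Finset.filter_eq', eq_comm]

lemma aCoef_succ {G : Type*} [Group G] [Fintype G] [DecidableEq G] (d : G → ℕ) (n : ℕ) (x : G) :
    aCoef d (n+1) x = ∑ z : G, d (x * z⁻¹) * aCoef d n z := by
  unfold aCoef
  simp only [Finset.sum_filter, Finset.mul_sum, mul_ite, mul_zero]
  have key : ∑ y : Fin (n+1) → G, (if (List.ofFn y).prod = x then ∏ i, d (y i) else 0)
      = ∑ p : G × (Fin n → G),
          (if p.1 * (List.ofFn p.2).prod = x then d p.1 * ∏ i, d (p.2 i) else 0) := by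
    refine (Fintype.sum_equiv (Fin.consEquiv (fun _ : Fin (n+1) => G)) _ _ fun p => ?_).symm
    have h1 : (List.ofFn (Fin.cons p.1 p.2 : Fin (n+1) → G)).prod
        = p.1 * (List.ofFn p.2).prod := by simp [List.ofFn_succ]
    have h2 : (∏ i, d ((Fin.cons p.1 p.2 : Fin (n+1) → G) i))
        = d p.1 * ∏ i, d (p.2 i) := by simp [Fin.prod_univ_succ]
    simp only [Fin.consEquiv_apply, Fin.consEquiv, Equiv.coe_fn_mk, h1, h2]
  rw [key, Fintype.sum_prod_type, Finset.sum_comm]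
  rw [show ∑ z : G, ∑ y : Fin n → G, (if (List.ofFn y).prod = z then d (x * z⁻¹) * ∏ i, d (y i) else 0)
      = ∑ y : Fin n → G, ∑ z : G, (if (List.ofFn y).prod = z then d (x * z⁻¹) * ∏ i, d (y i) else 0)
    from Finset.sum_comm]
  refine Finset.sum_congr rfl fun y _ => ?_
  have hiff : ∀ z : G, z * (List.ofFn y).prod = x ↔ z = x * ((List.ofFn y).prod)⁻¹ := by
    intro z
    constructor
    · intro h; rw [← h]; group
    · intro h; rw [h]; group
  simp only [hiff, Finset.sum_ite_eq', Finset.sum_ite_eq, Finset.mem_univ, if_true]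


theorem stmt3 {G : Type*} [Group G] [Fintype G] [DecidableEq G] (d : G → ℕ)
    (M N : Matrix G G (Polynomial ℤ))
    (hM : ∀ x y : G,
      M x y = Polynomial.C (d (x * y⁻¹) : ℤ) * Polynomial.X - if x = y then 1 else 0)
    (hN : ∀ x y : G,
      N x y = if y = 1 then (if x = 1 then -1 else 0) else M x y) :
    (M.det : PowerSeries ℤ) * genSeries d (1 : G) = (N.det : PowerSeries ℤ) := by
  set φ : Polynomial ℤ →+* PowerSeries ℤ := Polynomial.coeToPowerSeries.ringHom with hφ
  set A : Matrix G G (PowerSeries ℤ) := M.map φ with hA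
  set b : G → PowerSeries ℤ := fun x => if x = 1 then -1 else 0 with hb
  set F : G → PowerSeries ℤ := genSeries d with hF
  have hAF : A.mulVec F = b := by
    funext x
    show ∑ y : G, A x y * F y = b x
    have hentry : ∀ y : G, A x y
        = PowerSeries.C (d (x * y⁻¹) : ℤ) * PowerSeries.X
          - (if x = y then 1 else 0) := by
      intro y
      simp only [hA, Matrix.map_apply, hφ, Polynomial.coeToPowerSeries.ringHom_apply, hM,
        Polynomial.coe_sub, Polynomial.coe_mul, Polynomial.coe_C, Polynomial.coe_X,
        apply_ite (fun p : Polynomial ℤ => (p : PowerSeries ℤ)), Polynomial.coe_one,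
        Polynomial.coe_zero]
    ext k
    rw [map_sum]
    have hterm : ∀ y : G, (PowerSeries.coeff k) (A x y * F y)
        = (d (x * y⁻¹) : ℤ) * (PowerSeries.coeff k) (PowerSeries.X * F y)
          - (if x = y then (aCoef d k y : ℤ) else 0) := by
      intro y
      rw [hentry, sub_mul, map_sub, mul_assoc, PowerSeries.coeff_C_mul]
      congr 1
      split_ifs with h
      · simp [hF, genSeries]
      · simp
    simp only [hterm, Finset.sum_sub_distrib, Finset.sum_ite_eq, Finset.mem_univ, if_true]
    cases k with
    | zero =>
      simp only [PowerSeries.coeff_zero_eq_constantCoeff, map_mul,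
        PowerSeries.constantCoeff_X, mul_zero, Finset.sum_const_zero, zero_sub]
      simp only [zero_mul, mul_zero, Finset.sum_const_zero, zero_sub, aCoef_zero, hb]
      split_ifs with h <;> simp
    | succ k =>
      simp only [PowerSeries.coeff_succ_X_mul]
      have hFk : ∀ y : G, (PowerSeries.coeff k) (F y) = (aCoef d k y : ℤ) := by
        intro y; simp [hF, genSeries]
      have hFk1 : (PowerSeries.coeff (k+1)) (F x) = (aCoef d (k+1) x : ℤ) := by
        simp [hF, genSeries]
      simp only [hFk, hFk1]
      rw [aCoef_succ]
      push_cast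
      simp [hb, apply_ite (PowerSeries.coeff (k+1))]
  have hdet : A.det • F = A.adjugate.mulVec b := by
    rw [← hAF, Matrix.mulVec_mulVec, Matrix.adjugate_mul, Matrix.smul_mulVec,
      Matrix.one_mulVec]
  have h1 : A.det * F 1 = (A.adjugate.mulVec b) 1 := by
    rw [← hdet]; rfl
  have h2 : A.adjugate.mulVec b = Matrix.cramer A b := (Matrix.cramer_eq_adjugate_mulVec A b).symm
  have h3 : A.updateCol 1 b = N.map φ := by
    refine Matrix.ext fun x y => ?_
    rw [Matrix.updateCol_apply, Matrix.map_apply, hN]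
    by_cases h : y = 1
    · simp only [h, if_true]
      show (if x = 1 then (-1 : PowerSeries ℤ) else 0) = _
      split_ifs with h' <;> simp
    · simp only [h, if_false]
      rfl
  have hMd : (M.det : PowerSeries ℤ) = A.det := by
    rw [hA, ← RingHom.mapMatrix_apply, ← RingHom.map_det, hφ,
      Polynomial.coeToPowerSeries.ringHom_apply]
  have hNd : (N.det : PowerSeries ℤ) = (N.map ⇑φ).det := by
    rw [← RingHom.mapMatrix_apply, ← RingHom.map_det, hφ,
      Polynomial.coeToPowerSeries.ringHom_apply]
  rw [hMd, hNd, ← h3, h1, h2, Matrix.cramer_apply]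
end

section
/- Let k be a field and let A be a k-algebra equipped with an ℕ-grading by k-submodules 𝒜 : ℕ → Submodule k A (a GradedAlgebra structure) such that 𝒜(0) = k·1 and each 𝒜(n) is finite-dimensional. Suppose Y ⊆ A is a set of homogeneous elements of positive degree such that the canonical algebra homomorphism from the free associative algebra FreeAlgebra k Y to A (sending each generator to the corresponding element of Y) is bijective. Then A is finitely generated as a k-algebra if and only if the Hilbert series P(A,t) = Σ_{n≥0} dim_k(𝒜(n))·tⁿ ∈ ℤ[[t]] is the inverse of a polynomial, i.e., there exists q(t) ∈ ℤ[t] with P(A,t)·q(t) = 1 in ℤ[[t]]. -/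
open scoped DirectSum

section Piece

variable {k : Type*} [Field k] {A : Type*} [Ring A] [Algebra k A]
variable (𝒜 : ℕ → Submodule k A) [GradedAlgebra 𝒜]

/-- Projection onto the degree `n` piece, as a linear map `A →ₗ[k] A`. -/
noncomputable def gproj (n : ℕ) : A →ₗ[k] A :=
  (𝒜 n).subtype ∘ₗ (DirectSum.component k ℕ (fun i => ↥(𝒜 i)) n) ∘ₗ
    (DirectSum.decomposeLinearEquiv 𝒜).toLinearMap

lemma gproj_same {n : ℕ} {x : A} (hx : x ∈ 𝒜 n) : gproj 𝒜 n x = x := by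
  show ((DirectSum.decompose 𝒜 x) n : A) = x
  exact DirectSum.decompose_of_mem_same 𝒜 hx

lemma gproj_ne {m n : ℕ} {x : A} (hx : x ∈ 𝒜 m) (h : m ≠ n) : gproj 𝒜 n x = 0 := by
  show ((DirectSum.decompose 𝒜 x) n : A) = 0
  rw [DirectSum.decompose_of_mem_ne 𝒜 hx h]

/-- A homogeneous basis of `A` restricts to a basis of each graded piece. -/
noncomputable def pieceBasis {ι : Type*} (b : Module.Basis ι k A) (dg : ι → ℕ)
    (hb : ∀ i, b i ∈ 𝒜 (dg i)) (n : ℕ) : Module.Basis {i // dg i = n} k (𝒜 n) := by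
  refine Module.Basis.mk (v := fun i => ⟨b i.1, by have h := hb i.1; rwa [i.2] at h⟩) ?_ ?_
  · have h1 : LinearIndependent k (fun i : {i // dg i = n} => b i.1) :=
      b.linearIndependent.comp _ Subtype.val_injective
    exact LinearIndependent.of_comp ((𝒜 n).subtype) h1
  · rintro ⟨x, hx⟩ -
    have hx' : x ∈ Submodule.span k (Set.range fun i : {i // dg i = n} => b i.1) := by
      have hsum : ∑ i ∈ (b.repr x).support, (b.repr x) i • b i = x := by
        have h := b.linearCombination_repr x
        rwa [Finsupp.linearCombination_apply, Finsupp.sum] at h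
      have hx2 : x = ∑ i ∈ (b.repr x).support, (b.repr x) i • gproj 𝒜 n (b i) := by
        calc x = gproj 𝒜 n x := (gproj_same 𝒜 hx).symm
          _ = ∑ i ∈ (b.repr x).support, (b.repr x) i • gproj 𝒜 n (b i) := by
              conv_lhs => rw [← hsum]
              rw [map_sum]
              simp [map_smul]
      rw [hx2]
      refine Submodule.sum_mem _ fun i _ => Submodule.smul_mem _ _ ?_
      by_cases h : dg i = n
      · rw [gproj_same 𝒜 (h ▸ hb i)]
        exact Submodule.subset_span ⟨⟨i, h⟩, rfl⟩
      · rw [gproj_ne 𝒜 (hb i) h]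
        exact Submodule.zero_mem _
    have : ∃ y ∈ Submodule.span k (Set.range fun i : {i // dg i = n} =>
        (⟨b i.1, by have h := hb i.1; rwa [i.2] at h⟩ : 𝒜 n)), (𝒜 n).subtype y = x := by
      have hmap : (Submodule.span k (Set.range fun i : {i // dg i = n} =>
          (⟨b i.1, by have h := hb i.1; rwa [i.2] at h⟩ : 𝒜 n))).map (𝒜 n).subtype
          = Submodule.span k (Set.range fun i : {i // dg i = n} => b i.1) := by
        rw [Submodule.map_span, ← Set.range_comp]
        rfl
      rw [← hmap] at hx'
      exact hx'
    obtain ⟨y, hy, hyx⟩ := this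
    have : y = ⟨x, hx⟩ := Subtype.ext hyx
    rwa [this] at hy

lemma finrank_piece {ι : Type*} (b : Module.Basis ι k A) (dg : ι → ℕ)
    (hb : ∀ i, b i ∈ 𝒜 (dg i)) (n : ℕ) [FiniteDimensional k (𝒜 n)] :
    Module.finrank k (𝒜 n) = Nat.card {i // dg i = n} := by
  haveI := FiniteDimensional.fintypeBasisIndex (pieceBasis 𝒜 b dg hb n)
  rw [Module.finrank_eq_card_basis (pieceBasis 𝒜 b dg hb n), Nat.card_eq_fintype_card]

lemma finite_piece {ι : Type*} (b : Module.Basis ι k A) (dg : ι → ℕ)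
    (hb : ∀ i, b i ∈ 𝒜 (dg i)) (n : ℕ) [FiniteDimensional k (𝒜 n)] :
    Finite {i // dg i = n} :=
  Module.Finite.finite_basis (pieceBasis 𝒜 b dg hb n)

end Piece

section Count

variable {Y : Type*}

private def fwd (d : Y → ℕ) (n : ℕ) (hn : n ≠ 0) :
    {l : List Y // (l.map d).sum = n} →
      Σ m : Fin (n + 1), {y : Y // d y = (m : ℕ)} × {l : List Y // (l.map d).sum = n - (m : ℕ)}
  | ⟨[], h⟩ => absurd h (by simpa using fun h' => hn h'.symm)
  | ⟨y :: t, h⟩ =>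
      ⟨⟨d y, by simp only [List.map_cons, List.sum_cons] at h; omega⟩, ⟨y, rfl⟩,
        ⟨t, show (t.map d).sum = n - d y by
          simp only [List.map_cons, List.sum_cons] at h; omega⟩⟩

private lemma fwd_bij (d : Y → ℕ) (n : ℕ) (hn : n ≠ 0) : Function.Bijective (fwd d n hn) := by
  constructor
  · have key : ∀ x : {l : List Y // (l.map d).sum = n},
        ((fwd d n hn x).2.1 : Y) :: ((fwd d n hn x).2.2 : List Y) = (x : List Y) := by
      rintro ⟨l, h⟩
      cases l with
      | nil => exact absurd h (by simpa using fun h' => hn h'.symm)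
      | cons y t => rfl
    intro x₁ x₂ hx
    have h1 := key x₁
    rw [hx] at h1
    exact Subtype.ext (h1.symm.trans (key x₂))
  · rintro ⟨⟨m, hm⟩, ⟨y, hy⟩, ⟨t, ht⟩⟩
    dsimp at hy ht
    subst hy
    refine ⟨⟨y :: t, ?_⟩, ?_⟩
    · simp only [List.map_cons, List.sum_cons]; omega
    · rfl

lemma card_wt_zero (d : Y → ℕ) (hd : ∀ y, 0 < d y) :
    Nat.card {l : List Y // (l.map d).sum = 0} = 1 := by
  haveI : Unique {l : List Y // (l.map d).sum = 0} := by
    refine ⟨⟨⟨[], by simp⟩⟩, ?_⟩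
    rintro ⟨l, hl⟩
    cases l with
    | nil => rfl
    | cons y t =>
      simp only [List.map_cons, List.sum_cons] at hl
      exact absurd hl (by have := hd y; omega)
  exact Nat.card_unique

lemma card_wt_rec (d : Y → ℕ) [∀ m, Finite {y : Y // d y = m}]
    [∀ m, Finite {l : List Y // (l.map d).sum = m}] (n : ℕ) (hn : n ≠ 0) :
    Nat.card {l : List Y // (l.map d).sum = n}
      = ∑ m ∈ Finset.range (n + 1),
          Nat.card {y : Y // d y = m} * Nat.card {l : List Y // (l.map d).sum = n - m} := by
  rw [Nat.card_congr (Equiv.ofBijective _ (fwd_bij d n hn))]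
  haveI : ∀ m : ℕ, Fintype {y : Y // d y = m} := fun m => Fintype.ofFinite _
  haveI : ∀ m : ℕ, Fintype {l : List Y // (l.map d).sum = m} := fun m => Fintype.ofFinite _
  rw [Nat.card_eq_fintype_card, Fintype.card_sigma]
  have step : ∀ m : Fin (n + 1), Fintype.card ({y : Y // d y = (m : ℕ)} ×
      {l : List Y // (l.map d).sum = n - (m : ℕ)})
      = Nat.card {y : Y // d y = (m : ℕ)} * Nat.card {l : List Y // (l.map d).sum = n - (m : ℕ)} := by
    intro m
    rw [Fintype.card_prod, Nat.card_eq_fintype_card, Nat.card_eq_fintype_card]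
  rw [Finset.sum_congr rfl fun m _ => step m]
  exact Fin.sum_univ_eq_sum_range
    (fun m => Nat.card {y : Y // d y = m} * Nat.card {l : List Y // (l.map d).sum = n - m}) _

end Count

lemma basisFreeMonoid_ofList (k : Type*) [CommRing k] (Y : Type*) (l : List Y) :
    FreeAlgebra.basisFreeMonoid k Y (FreeMonoid.ofList l)
      = (l.map (FreeAlgebra.ι k)).prod := by
  have hbase : ∀ y : Y, (FreeAlgebra.equivMonoidAlgebraFreeMonoid (R := k) (X := Y)).symm
      (MonoidAlgebra.of k (FreeMonoid Y) (FreeMonoid.of y)) = FreeAlgebra.ι k y := by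
    intro y
    rw [AlgEquiv.symm_apply_eq]
    show MonoidAlgebra.of k (FreeMonoid Y) (FreeMonoid.of y)
      = FreeAlgebra.lift k (fun x => (MonoidAlgebra.of k (FreeMonoid Y)) (FreeMonoid.of x))
          (FreeAlgebra.ι k y)
    rw [FreeAlgebra.lift_ι_apply]
  have key : ∀ l : List Y, (FreeAlgebra.equivMonoidAlgebraFreeMonoid (R := k) (X := Y)).symm
      (MonoidAlgebra.of k (FreeMonoid Y) (FreeMonoid.ofList l))
      = (l.map (FreeAlgebra.ι k)).prod := by
    intro l
    induction l with
    | nil =>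
      show FreeAlgebra.equivMonoidAlgebraFreeMonoid.symm (MonoidAlgebra.of k (FreeMonoid Y) 1) = 1
      rw [map_one, map_one]
    | cons y t ih =>
      have : FreeMonoid.ofList (y :: t) = FreeMonoid.of y * FreeMonoid.ofList t := rfl
      rw [this, map_mul, map_mul, ih, hbase, List.map_cons, List.prod_cons]
  have : FreeAlgebra.basisFreeMonoid k Y (FreeMonoid.ofList l)
      = (FreeAlgebra.equivMonoidAlgebraFreeMonoid (R := k) (X := Y)).symm
        (MonoidAlgebra.of k (FreeMonoid Y) (FreeMonoid.ofList l)) := by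
    rw [FreeAlgebra.basisFreeMonoid, Module.Basis.map_apply]
    rfl
  rw [this, key]

theorem stmt10 {k : Type*} [Field k] {A : Type*} [Ring A] [Algebra k A]
    (𝒜 : ℕ → Submodule k A) [GradedAlgebra 𝒜]
    (h0 : 𝒜 0 = (1 : Submodule k A))
    (hfd : ∀ n : ℕ, FiniteDimensional k (𝒜 n))
    (Y : Set A) (hY : ∀ y ∈ Y, ∃ n : ℕ, 0 < n ∧ y ∈ 𝒜 n)
    (hfree : Function.Bijective (FreeAlgebra.lift k ((↑) : Y → A))) :
    Algebra.FiniteType k A ↔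
      ∃ q : Polynomial ℤ,
        (PowerSeries.mk fun n => (Module.finrank k (𝒜 n) : ℤ)) * (q : PowerSeries ℤ) = 1 := by
  classical
  set F : FreeAlgebra k Y →ₐ[k] A := FreeAlgebra.lift k ((↑) : Y → A) with hFdef
  let e : FreeAlgebra k Y ≃ₐ[k] A := AlgEquiv.ofBijective F hfree
  have he : ∀ x, e x = F x := fun x => rfl
  let d : Y → ℕ := fun y => (hY y y.2).choose
  have hdpos : ∀ y : Y, 0 < d y := fun y => (hY y y.2).choose_spec.1
  have hdmem : ∀ y : Y, (y : A) ∈ 𝒜 (d y) := fun y => (hY y y.2).choose_spec.2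
  -- the monomial basis of A
  let b : Module.Basis (FreeMonoid Y) k A := (FreeAlgebra.basisFreeMonoid k Y).map e.toLinearEquiv
  have hb : ∀ l : List Y, b (FreeMonoid.ofList l) = (l.map (fun y : Y => (y : A))).prod := by
    intro l
    have h1 : b (FreeMonoid.ofList l) = e ((l.map (FreeAlgebra.ι k)).prod) := by
      show e.toLinearEquiv ((FreeAlgebra.basisFreeMonoid k Y) (FreeMonoid.ofList l)) = _
      rw [basisFreeMonoid_ofList]
      rfl
    rw [h1, map_list_prod, List.map_map]
    have hfun : (⇑e ∘ FreeAlgebra.ι k : Y → A) = fun y : Y => (y : A) := by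
      funext y
      show e (FreeAlgebra.ι k y) = (y : A)
      rw [he, hFdef, FreeAlgebra.lift_ι_apply]
    rw [hfun]
  let dg : FreeMonoid Y → ℕ := fun w => ((FreeMonoid.toList w).map d).sum
  have hprod : ∀ l : List Y, (l.map (fun y : Y => (y : A))).prod ∈ 𝒜 ((l.map d).sum) := by
    intro l
    induction l with
    | nil =>
      simp only [List.map_nil, List.prod_nil, List.sum_nil]
      exact SetLike.one_mem_graded 𝒜
    | cons y t ih =>
      simp only [List.map_cons, List.prod_cons, List.sum_cons]
      exact SetLike.mul_mem_graded (hdmem y) ih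
  have hbmem : ∀ w, b w ∈ 𝒜 (dg w) := by
    intro w
    have hb' := hb (FreeMonoid.toList w)
    rw [show FreeMonoid.ofList (FreeMonoid.toList w) = w from rfl] at hb'
    rw [hb']
    exact hprod _
  -- identification of dimensions with word counts
  set D : ℕ → ℕ := fun n => Nat.card {l : List Y // (l.map d).sum = n} with hD
  have hEq : ∀ n : ℕ, Nat.card {w : FreeMonoid Y // dg w = n}
      = Nat.card {l : List Y // (l.map d).sum = n} := fun n =>
    Nat.card_congr (Equiv.subtypeEquiv FreeMonoid.toList (fun w => Iff.rfl))
  have hrank : ∀ n, Module.finrank k (𝒜 n) = D n := by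
    intro n
    haveI := hfd n
    rw [finrank_piece 𝒜 b dg hbmem n, hEq n]
  haveI hfinL : ∀ n : ℕ, Finite {l : List Y // (l.map d).sum = n} := by
    intro n
    haveI := hfd n
    haveI := finite_piece 𝒜 b dg hbmem n
    exact Finite.of_equiv _ (Equiv.subtypeEquiv FreeMonoid.toList fun w => Iff.rfl)
  haveI hfinY : ∀ m : ℕ, Finite {y : Y // d y = m} := by
    intro m
    refine Finite.of_injective
      (fun y => (⟨[y.1], by simp [y.2]⟩ : {l : List Y // (l.map d).sum = m})) ?_
    rintro y1 y2 h
    rw [Subtype.ext_iff] at h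
    exact Subtype.ext (by simpa [Subtype.ext_iff] using h)
  set a : ℕ → ℕ := fun m => Nat.card {y : Y // d y = m} with ha
  have ha0 : a 0 = 0 := by
    haveI : IsEmpty {y : Y // d y = 0} := ⟨fun y => by have := hdpos y.1; omega⟩
    simp [ha]
  set P : PowerSeries ℤ := PowerSeries.mk fun n => (Module.finrank k (𝒜 n) : ℤ) with hP
  set f : PowerSeries ℤ := PowerSeries.mk fun m => (a m : ℤ) with hf
  have hPD : ∀ n, PowerSeries.coeff n P = (D n : ℤ) := by
    intro n
    rw [hP, PowerSeries.coeff_mk, hrank n]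
  -- the key identity  P * (1 - f) = 1
  have hkey : P * (1 - f) = 1 := by
    ext n
    rw [mul_sub, mul_one, map_sub, PowerSeries.coeff_mul, PowerSeries.coeff_one, hPD n]
    have hterm : ∀ p ∈ Finset.HasAntidiagonal.antidiagonal n,
        PowerSeries.coeff p.1 P * PowerSeries.coeff p.2 f = (D p.1 : ℤ) * (a p.2 : ℤ) := by
      intro p _
      rw [hPD, hf, PowerSeries.coeff_mk]
    rw [Finset.sum_congr rfl hterm]
    rcases Nat.eq_zero_or_pos n with hn | hn
    · subst hn
      rw [Finset.Nat.sum_antidiagonal_eq_sum_range_succ_mk]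
      have hD0 : D 0 = 1 := by rw [hD]; exact card_wt_zero d hdpos
      simp [hD0, ha0]
    · have hn' : n ≠ 0 := Nat.pos_iff_ne_zero.mp hn
      rw [if_neg hn']
      rw [Finset.Nat.sum_antidiagonal_eq_sum_range_succ_mk]
      have hre : ∑ i ∈ Finset.range (n + 1), (D i : ℤ) * (a (n - i) : ℤ)
          = ∑ m ∈ Finset.range (n + 1), (a m : ℤ) * (D (n - m) : ℤ) := by
        rw [← Finset.sum_range_reflect]
        refine Finset.sum_congr rfl fun j hj => ?_
        have hj' : j ≤ n := Nat.lt_succ_iff.mp (Finset.mem_range.mp hj)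
        have e1 : n + 1 - 1 - j = n - j := by omega
        have e2 : n - (n - j) = j := by omega
        rw [e1, e2, mul_comm]
      rw [hre]
      have hrec := card_wt_rec d n hn'
      have : (D n : ℤ) = ∑ m ∈ Finset.range (n + 1), (a m : ℤ) * (D (n - m) : ℤ) := by
        rw [hD]
        push_cast [hrec]
        rfl
      rw [← this, sub_self]
  constructor
  · -- finitely generated ⇒ inverse polynomial
    intro hft
    haveI hft' : Algebra.FiniteType k (FreeAlgebra k Y) := hft.equiv e.symm
    obtain ⟨S, hS⟩ := hft'.out
    have hsupp : ∀ x : FreeAlgebra k Y, ∃ T : Finset Y,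
        x ∈ Algebra.adjoin k (FreeAlgebra.ι k '' ↑T) := by
      intro x
      induction x using FreeAlgebra.induction with
      | grade0 r => exact ⟨∅, Subalgebra.algebraMap_mem _ r⟩
      | grade1 y => exact ⟨{y}, Algebra.subset_adjoin (by simp)⟩
      | mul x y hx hy =>
        obtain ⟨T1, h1⟩ := hx
        obtain ⟨T2, h2⟩ := hy
        refine ⟨T1 ∪ T2, Subalgebra.mul_mem _ ?_ ?_⟩
        · exact Algebra.adjoin_mono (Set.image_mono (by simp)) h1
        · exact Algebra.adjoin_mono (Set.image_mono (by simp)) h2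
      | add x y hx hy =>
        obtain ⟨T1, h1⟩ := hx
        obtain ⟨T2, h2⟩ := hy
        refine ⟨T1 ∪ T2, Subalgebra.add_mem _ ?_ ?_⟩
        · exact Algebra.adjoin_mono (Set.image_mono (by simp)) h1
        · exact Algebra.adjoin_mono (Set.image_mono (by simp)) h2
    choose T hT using hsupp
    set T0 : Finset Y := S.biUnion T with hT0
    have hsubT : ∀ s ∈ S, ((T s : Finset Y) : Set Y) ⊆ ((T0 : Finset Y) : Set Y) := by
      intro s hs z hz
      exact Finset.mem_coe.mpr (Finset.mem_biUnion.mpr ⟨s, hs, hz⟩)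
    have htop : Algebra.adjoin k (FreeAlgebra.ι k '' ((T0 : Finset Y) : Set Y)) = ⊤ := by
      rw [← top_le_iff, ← hS]
      refine Algebra.adjoin_le ?_
      intro s hs
      exact Algebra.adjoin_mono (Set.image_mono (hsubT s hs)) (hT s)
    have hYT : ∀ y : Y, y ∈ T0 := by
      by_contra hcon
      push_neg at hcon
      obtain ⟨y, hy⟩ := hcon
      set g : FreeAlgebra k Y →ₐ[k] Polynomial k :=
        FreeAlgebra.lift k (fun y' : Y => if y' = y then Polynomial.X else 0) with hg
      have hXmem : (Polynomial.X : Polynomial k)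
          ∈ Algebra.adjoin k (⇑g '' (FreeAlgebra.ι k '' ((T0 : Finset Y) : Set Y))) := by
        rw [← AlgHom.map_adjoin, htop]
        refine ⟨FreeAlgebra.ι k y, trivial, ?_⟩
        have : g (FreeAlgebra.ι k y) = Polynomial.X := by
          rw [hg]
          simp [FreeAlgebra.lift_ι_apply]
        exact this
      have hbot : (Polynomial.X : Polynomial k) ∈ (⊥ : Subalgebra k (Polynomial k)) := by
        refine Algebra.adjoin_le ?_ hXmem
        rintro z ⟨_, ⟨y', hy', rfl⟩, rfl⟩
        have : g (FreeAlgebra.ι k y') = 0 := by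
          rw [hg]
          simp only [FreeAlgebra.lift_ι_apply]
          exact if_neg (fun h : y' = y => hy (h ▸ hy'))
        rw [this]
        exact Subalgebra.zero_mem _
      rw [Algebra.mem_bot] at hbot
      obtain ⟨c, hc⟩ := hbot
      have := congrArg (fun p => Polynomial.coeff p 1) hc
      simp only [Polynomial.algebraMap_eq, Polynomial.coeff_C, Polynomial.coeff_X_one] at this
      exact one_ne_zero this.symm
    haveI : Finite Y := Finite.of_injective
      (fun y : Y => (⟨y, hYT y⟩ : ↥T0))
      (fun y1 y2 h => by simpa [Subtype.ext_iff] using h)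
    haveI : Fintype Y := Fintype.ofFinite _
    set N : ℕ := Finset.univ.sup d with hN
    have hdN : ∀ y : Y, d y ≤ N := fun y => Finset.le_sup (Finset.mem_univ y)
    have haN : ∀ m, N < m → a m = 0 := by
      intro m hm
      haveI : IsEmpty {y : Y // d y = m} := ⟨fun y => by have := hdN y.1; omega⟩
      simp [ha]
    refine ⟨1 - ∑ m ∈ Finset.range (N + 1), Polynomial.C (a m : ℤ) * Polynomial.X ^ m, ?_⟩
    have hsumcoeff : ∀ n : ℕ,
        (∑ m ∈ Finset.range (N + 1), Polynomial.C (a m : ℤ) * Polynomial.X ^ m).coeff n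
          = (a n : ℤ) := by
      intro n
      rw [Polynomial.finset_sum_coeff]
      simp only [Polynomial.coeff_C_mul, Polynomial.coeff_X_pow]
      rw [Finset.sum_congr rfl (fun m _ => by rw [mul_ite, mul_one, mul_zero]),
        Finset.sum_ite_eq (Finset.range (N + 1)) n (fun m => (a m : ℤ))]
      by_cases hn : n ∈ Finset.range (N + 1)
      · rw [if_pos hn]
      · rw [if_neg hn, haN n (by simpa [Nat.lt_succ_iff] using hn)]
        simp
    have hcoe : (((1 - ∑ m ∈ Finset.range (N + 1),
        Polynomial.C (a m : ℤ) * Polynomial.X ^ m) : Polynomial ℤ) : PowerSeries ℤ)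
        = 1 - f := by
      ext n
      rw [Polynomial.coeff_coe, map_sub, Polynomial.coeff_sub, hsumcoeff n, hf,
        PowerSeries.coeff_mk, PowerSeries.coeff_one, Polynomial.coeff_one]
    rw [hcoe, hkey]
  · -- inverse polynomial ⇒ finitely generated
    rintro ⟨q, hq⟩
    have hq' : (q : PowerSeries ℤ) = 1 - f := by
      calc (q : PowerSeries ℤ) = (P * (1 - f)) * q := by rw [hkey, one_mul]
        _ = (P * q) * (1 - f) := by ring
        _ = 1 - f := by rw [hq, one_mul]
    set N : ℕ := q.natDegree + 1 with hNdef
    have haN : ∀ m, N ≤ m → a m = 0 := by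
      intro m hm
      have h1 : PowerSeries.coeff m f = (a m : ℤ) := by rw [hf, PowerSeries.coeff_mk]
      have h2 : PowerSeries.coeff m f = 0 := by
        have : f = 1 - (q : PowerSeries ℤ) := by rw [hq']; ring
        rw [this, map_sub, PowerSeries.coeff_one, Polynomial.coeff_coe,
          Polynomial.coeff_eq_zero_of_natDegree_lt (by omega), if_neg (by omega)]
        ring
      rw [h1] at h2
      exact_mod_cast h2
    have hbd : ∀ y : Y, d y < N + 1 := by
      intro y
      by_contra hcon
      push_neg at hcon
      have h0' : a (d y) = 0 := haN (d y) (by omega)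
      haveI := hfinY (d y)
      have : IsEmpty {y' : Y // d y' = d y} := by
        rcases Nat.card_eq_zero.mp h0' with h | h
        · exact h
        · exact absurd h (by exact not_infinite_iff_finite.mpr (hfinY (d y)))
      exact this.false ⟨y, rfl⟩
    haveI : Finite Y := by
      let proj : (Σ m : Fin (N + 1), {y' : Y // d y' = (m : ℕ)}) → Y := fun z => z.2.1
      refine Finite.of_injective
        (fun y : Y => (⟨⟨d y, hbd y⟩, ⟨y, rfl⟩⟩ :
          Σ m : Fin (N + 1), {y' : Y // d y' = (m : ℕ)})) ?_
      intro y1 y2 h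
      exact congrArg proj h
    have hadj : Algebra.adjoin k Y = ⊤ := by
      rw [Algebra.adjoin_eq_range_freeAlgebra_lift, ← hFdef, AlgHom.range_eq_top]
      exact hfree.2
    exact ⟨⟨(Set.toFinite Y).toFinset, by rwa [Set.Finite.coe_toFinset]⟩⟩
end

section
/- Suppose X is finite and nonempty, that there exists a generator of weight e (i.e., some x₀ ∈ X with w(x₀) = e), and that the weight function is not constantly e (i.e., some x₁ ∈ X has w(x₁) ≠ e). Then the identity component R_e of k⟨X⟩ is not finitely generated as a k-algebra. -/
open Finsupp

/-- Weight of a word in letters x₀, x₁ is (w x₁)^(count of x₁), when w x₀ = 1. -/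
lemma aux_prod {X G : Type*} [Group G] [DecidableEq X] (w : X → G) (x₀ x₁ : X)
    (hx₀ : w x₀ = 1) (hne : x₀ ≠ x₁) :
    ∀ l : List X, (∀ y ∈ l, y = x₀ ∨ y = x₁) →
      (l.map w).prod = (w x₁) ^ (l.count x₁)
  | [], _ => by simp
  | y :: t, h => by
    have ht := aux_prod w x₀ x₁ hx₀ hne t (fun z hz => h z (List.mem_cons_of_mem _ hz))
    rcases h y List.mem_cons_self with rfl | rfl
    · simp [List.count_cons, hne, ht, hx₀]
    · simp [List.count_cons, ht, pow_succ]
      exact ((Commute.refl (w y)).pow_right _).eq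

/-- The word x₁ x₀^i x₁^(n-1) admits no nontrivial factorization into weight-1 words. -/
lemma aux_irred {X G : Type*} [Group G] [DecidableEq X] (w : X → G) (x₀ x₁ : X)
    (hx₀ : w x₀ = 1) (hx₁ : w x₁ ≠ 1) (n : ℕ) (hn : n = orderOf (w x₁)) (hn2 : 2 ≤ n)
    (i : ℕ) (a b : List X)
    (hab : a ++ b = x₁ :: (List.replicate i x₀ ++ List.replicate (n-1) x₁))
    (ha : (a.map w).prod = 1) : a = [] ∨ b = [] := by
  by_contra hcon
  push_neg at hcon
  obtain ⟨ha0, hb0⟩ := hcon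
  have hne : x₀ ≠ x₁ := fun h => hx₁ (h ▸ hx₀)
  have hmem : ∀ y ∈ a ++ b, y = x₀ ∨ y = x₁ := by
    rw [hab]; intro y hy
    simp only [List.mem_cons, List.mem_append, List.mem_replicate] at hy
    tauto
  have hmema : ∀ y ∈ a, y = x₀ ∨ y = x₁ := fun y hy => hmem y (List.mem_append_left _ hy)
  -- weight of a gives divisibility
  have hpow : (w x₁) ^ (a.count x₁) = 1 := by
    rw [← aux_prod w x₀ x₁ hx₀ hne a hmema, ha]
  have hdvd : n ∣ a.count x₁ := by
    rw [hn]; exact orderOf_dvd_of_pow_eq_one hpow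
  -- total count is n
  have htot : (a ++ b).count x₁ = n := by
    rw [hab]
    simp [List.count_cons, List.count_append, List.count_replicate, hne]
    omega
  rw [List.count_append] at htot
  -- a starts with x₁
  have hax : x₁ ∈ a := by
    obtain ⟨c, t, rfl⟩ := List.exists_cons_of_ne_nil ha0
    have : c = x₁ := by
      have := hab
      simp only [List.cons_append] at this
      exact (List.cons.injEq _ _ _ _ ▸ this).1
    rw [this]; exact List.mem_cons_self
  have hca : 0 < a.count x₁ := List.count_pos_iff.mpr hax
  -- b ends with x₁
  have hbx : x₁ ∈ b := by
    have h1 : (a ++ b).getLast? = b.getLast? := by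
      rw [List.getLast?_append]
      cases hb : b.getLast? with
      | none => exact absurd (List.getLast?_eq_none_iff.mp hb) hb0
      | some v => simp
    have h2 : (a ++ b).getLast? = some x₁ := by
      rw [hab]
      have : (x₁ :: (List.replicate i x₀ ++ List.replicate (n-1) x₁))
          = (x₁ :: List.replicate i x₀) ++ List.replicate (n-1) x₁ := by simp
      rw [this, List.getLast?_append]
      have : (List.replicate (n-1) x₁).getLast? = some x₁ := by
        have h3 : n - 1 ≠ 0 := by omega
        cases hm : n - 1 with
        | zero => omega
        | succ m =>
          rw [List.replicate_succ']
          simp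
      rw [this]; simp
    have : b.getLast? = some x₁ := by rw [← h1, h2]
    exact List.mem_of_getLast? this
  have hcb : 0 < b.count x₁ := List.count_pos_iff.mpr hbx
  -- contradiction
  have := Nat.le_of_dvd hca hdvd
  omega

theorem stmt11 {k : Type*} [Field k] {G : Type*} [Group G] [Fintype G]
    {X : Type*} [Fintype X] [Nonempty X] (w : X → G)
    (x₀ : X) (hx₀ : w x₀ = 1) (x₁ : X) (hx₁ : w x₁ ≠ 1)
    (Re : Subalgebra k (MonoidAlgebra k (FreeMonoid X)))
    (hRe : Subalgebra.toSubmodule Re =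
      Submodule.span k {f | ∃ m : FreeMonoid X,
        FreeMonoid.lift w m = 1 ∧ f = MonoidAlgebra.of k (FreeMonoid X) m}) :
    ¬ Re.FG := by
  classical
  set g := w x₁ with hg
  set n := orderOf g with hn
  have hn2 : 2 ≤ n := by
    have h1 : n ≠ 1 := fun h => hx₁ (orderOf_eq_one_iff.mp h)
    have h0 : 0 < n := orderOf_pos g
    omega
  -- membership in Re ↔ supported on weight-1 monomials
  have hRe' : Subalgebra.toSubmodule Re
      = MonoidAlgebra.supported k k {m : FreeMonoid X | FreeMonoid.lift w m = 1} := by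
    rw [hRe, MonoidAlgebra.supported_eq_span_single]
    congr 1
    ext f
    constructor
    · rintro ⟨m, hm, rfl⟩
      exact ⟨m, hm, rfl⟩
    · rintro ⟨m, hm, rfl⟩
      exact ⟨m, hm, rfl⟩
  have hmem : ∀ f : MonoidAlgebra k (FreeMonoid X), f ∈ Re ↔
      ↑f.coeff.support ⊆ {m : FreeMonoid X | FreeMonoid.lift w m = 1} := by
    intro f
    rw [← Subalgebra.mem_toSubmodule, hRe', MonoidAlgebra.mem_supported]
  intro hFG
  obtain ⟨s, hs⟩ := hFG
  -- the finite set of monomials appearing in generators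
  set T : Finset (FreeMonoid X) := s.sup (fun f => f.coeff.support) with hT
  set N : ℕ := (T.sup fun m => m.toList.length) + 1 with hN
  -- the bad word
  set L : List X := x₁ :: (List.replicate N x₀ ++ List.replicate (n-1) x₁) with hL
  set u : FreeMonoid X := FreeMonoid.ofList L with hu
  have hulen : u.toList.length = N + n := by
    simp [hu, hL]
    omega
  have huT : u ∉ T := by
    intro h
    have h2 : u.toList.length ≤ T.sup fun m => m.toList.length :=
      Finset.le_sup (f := fun m : FreeMonoid X => m.toList.length) h
    omega
  have hune : u ≠ 1 := by
    intro h
    have : u.toList.length = 0 := by rw [h]; rfl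
    omega
  -- weight of u is 1
  have hwu : FreeMonoid.lift w u = 1 := by
    rw [FreeMonoid.lift_apply]
    have : u.toList = L := rfl
    rw [this, hL]
    simp [List.prod_replicate, hx₀]
    rw [← pow_succ']
    have : n - 1 + 1 = n := by omega
    rw [this, hn]
    exact pow_orderOf_eq_one g
  -- irreducibility, transported to FreeMonoid
  have hirr : ∀ a b : FreeMonoid X, a * b = u → FreeMonoid.lift w a = 1 →
      a = 1 ∨ b = 1 := by
    intro a b h hwa
    have h' : a.toList ++ b.toList = L := by
      have : (a * b).toList = u.toList := by rw [h]
      exact (by simpa using this : a.toList ++ b.toList = u.toList)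
    rw [FreeMonoid.lift_apply] at hwa
    rcases aux_irred w x₀ x₁ hx₀ hx₁ n hn hn2 N a.toList b.toList h' hwa with h1 | h1
    · left
      exact FreeMonoid.toList.injective (by simpa using h1)
    · right
      exact FreeMonoid.toList.injective (by simpa using h1)
  -- key: every element of Re = adjoin k s vanishes at u
  have key : ∀ f : MonoidAlgebra k (FreeMonoid X), f ∈ Re → f.coeff u = 0 := by
    intro f hf
    rw [← hs] at hf
    induction hf using Algebra.adjoin_induction with
    | mem x hx =>
      have hxT : x.coeff.support ⊆ T := Finset.le_sup (f := fun f : MonoidAlgebra k (FreeMonoid X) => f.coeff.support) hx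
      have : u ∉ x.coeff.support := fun h => huT (hxT h)
      exact Finsupp.notMem_support_iff.mp this
    | algebraMap r =>
      have : (algebraMap k (MonoidAlgebra k (FreeMonoid X)) r).coeff u
          = (MonoidAlgebra.single (1 : FreeMonoid X) r).coeff u := rfl
      rw [this, MonoidAlgebra.coeff_single, Finsupp.single_apply, if_neg (fun h => hune h.symm)]
    | add x y hx hy ihx ihy =>
      rw [MonoidAlgebra.coeff_add, Finsupp.add_apply, ihx, ihy, add_zero]
    | mul x y hx hy ihx ihy =>
      have hxRe : x ∈ Re := by rw [← hs]; exact hx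
      have hyRe : y ∈ Re := by rw [← hs]; exact hy
      rw [MonoidAlgebra.coeff_mul]
      refine Finset.sum_eq_zero fun a ha => Finset.sum_eq_zero fun b hb => ?_
      show (if a * b = u then x.coeff a * y.coeff b else 0) = 0
      split_ifs with h
      · -- a * b = u, a ∈ supp x, b ∈ supp y
        have hwa : FreeMonoid.lift w a = 1 := (hmem x).mp hxRe ha
        rcases hirr a b h hwa with h1 | h1
        · subst h1
          rw [one_mul] at h
          subst h
          rw [ihy, mul_zero]
        · subst h1
          rw [mul_one] at h
          subst h
          rw [ihx, zero_mul]
      · rfl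
  -- but single u 1 ∈ Re with coefficient 1 ≠ 0 at u
  have humem : MonoidAlgebra.single u (1 : k) ∈ Re := by
    rw [← Subalgebra.mem_toSubmodule, hRe']
    exact Finsupp.single_mem_supported k 1 hwu
  have := key _ humem
  rw [MonoidAlgebra.coeff_single, Finsupp.single_apply, if_pos rfl] at this
  exact one_ne_zero this
end

section
/- Let X' ⊆ X be a subset, with weight function w' : X' → G the restriction of w, and let π : k⟨X⟩ → k⟨X'⟩ be the unique k-algebra homomorphism sending each generator in X' to itself and each generator in X \ X' to 0. Then π maps the identity component R_e of k⟨X⟩ onto the identity component R'_e of k⟨X'⟩. In particular, if R_e is a finitely generated k-algebra, then so is R'_e. -/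
theorem stmt12 {k : Type*} [Field k] {G : Type*} [Group G] [Fintype G]
    {X : Type*} (w : X → G) (X' : Set X) [DecidablePred (· ∈ X')]
    (π : MonoidAlgebra k (FreeMonoid X) →ₐ[k] MonoidAlgebra k (FreeMonoid X'))
    (hπ : ∀ x : X, π (MonoidAlgebra.of k (FreeMonoid X) (FreeMonoid.of x)) =
      if h : x ∈ X' then MonoidAlgebra.of k (FreeMonoid X') (FreeMonoid.of ⟨x, h⟩) else 0)
    (Re : Subalgebra k (MonoidAlgebra k (FreeMonoid X)))
    (hRe : Subalgebra.toSubmodule Re =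
      Submodule.span k {f | ∃ m : FreeMonoid X,
        FreeMonoid.lift w m = 1 ∧ f = MonoidAlgebra.of k (FreeMonoid X) m})
    (Re' : Subalgebra k (MonoidAlgebra k (FreeMonoid X')))
    (hRe' : Subalgebra.toSubmodule Re' =
      Submodule.span k {f | ∃ m : FreeMonoid X',
        FreeMonoid.lift (fun x : X' => w x) m = 1 ∧ f = MonoidAlgebra.of k (FreeMonoid X') m}) :
    Re.map π = Re' ∧ (Re.FG → Re'.FG) := by
  classical
  have key1 : ∀ m : FreeMonoid X, π (MonoidAlgebra.of k (FreeMonoid X) m) = 0 ∨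
      ∃ m' : FreeMonoid X', FreeMonoid.lift (fun x : X' => w x) m' = FreeMonoid.lift w m ∧
        π (MonoidAlgebra.of k (FreeMonoid X) m) = MonoidAlgebra.of k (FreeMonoid X') m' := by
    intro m
    induction m using FreeMonoid.recOn with
    | one => right; exact ⟨1, map_one _, by simp only [map_one]⟩
    | of_mul x m ih =>
      rw [map_mul, map_mul, hπ x]
      by_cases h : x ∈ X'
      · rw [dif_pos h]
        rcases ih with h0 | ⟨m', hw, hm⟩
        · left; rw [h0, mul_zero]
        · right
          refine ⟨FreeMonoid.of ⟨x, h⟩ * m', by simp [hw], ?_⟩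
          rw [hm, map_mul]
      · left; rw [dif_neg h, zero_mul]
  have key2 : ∀ m' : FreeMonoid X',
      π (MonoidAlgebra.of k (FreeMonoid X) (FreeMonoid.map Subtype.val m')) =
        MonoidAlgebra.of k (FreeMonoid X') m' ∧
      FreeMonoid.lift w (FreeMonoid.map Subtype.val m') =
        FreeMonoid.lift (fun x : X' => w x) m' := by
    intro m'
    induction m' using FreeMonoid.recOn with
    | one => exact ⟨by simp only [map_one], by simp only [map_one]⟩
    | of_mul x m' ih =>
      constructor
      · rw [map_mul, map_mul, map_mul, FreeMonoid.map_of, hπ, dif_pos x.2, ih.1]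
        simp
      · rw [map_mul, map_mul, map_mul, FreeMonoid.map_of, FreeMonoid.lift_eval_of,
          FreeMonoid.lift_eval_of, ih.2]
  have hsub : Subalgebra.toSubmodule (Re.map π) = Subalgebra.toSubmodule Re' := by
    have h1 : Subalgebra.toSubmodule (Re.map π) =
        Submodule.map π.toLinearMap (Subalgebra.toSubmodule Re) := rfl
    rw [h1, hRe, hRe', Submodule.map_span]
    apply le_antisymm
    · rw [Submodule.span_le]
      rintro _ ⟨f, ⟨m, hm1, rfl⟩, rfl⟩
      rcases key1 m with h0 | ⟨m', hw, hm⟩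
      · simp only [AlgHom.toLinearMap_apply, h0]
        exact Submodule.zero_mem _
      · simp only [AlgHom.toLinearMap_apply, hm]
        exact Submodule.subset_span ⟨m', hw.trans hm1, rfl⟩
    · rw [Submodule.span_le]
      rintro _ ⟨m', hm1, rfl⟩
      apply Submodule.subset_span
      exact ⟨_, ⟨FreeMonoid.map Subtype.val m', (key2 m').2.trans hm1, rfl⟩, (key2 m').1⟩
  have heq : Re.map π = Re' := Subalgebra.toSubmodule_injective hsub
  exact ⟨heq, fun h => heq ▸ h.map π⟩
end

section
/- Suppose there exists x ∈ G with x ≠ e such that d(e) ≥ 1, d(x) ≥ 1, and d(y) = 0 for all y ∈ G \ {e, x}. Let M(t) be the G×G matrix over ℤ[t] with entries M(t)_{x,y} = d(x·y⁻¹)·t − δ_{x,y}, and let N(t) be obtained from M(t) by replacing the column indexed by e with the column vector whose z-entry is −δ_{z,e}. Then 1/d(e) is a root of det(N(t)) but not of det(M(t)); equivalently, the polynomial 1 − d(e)·t divides det(N(t)) in ℚ[t] but does not divide det(M(t)). -/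
open Polynomial

lemma aux_dvd_iff (a : ℚ) (ha : a ≠ 0) (p : ℚ[X]) :
    (1 - C a * X) ∣ p ↔ p.eval (1 / a) = 0 := by
  have h : (1 - C a * X) = C (-a) * (X - C (1 / a)) := by
    rw [mul_sub, ← C_mul]
    have : (-a) * (1 / a) = -1 := by field_simp
    rw [this]
    simp only [map_neg, map_one]
    ring
  have hu : IsUnit (C (-a) : ℚ[X]) := Polynomial.isUnit_C.mpr (by simpa using ha)
  rw [h, hu.mul_left_dvd, Polynomial.dvd_iff_isRoot, IsRoot]

theorem stmt14 {G : Type*} [Group G] [Fintype G] [DecidableEq G] (d : G → ℕ)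
    (g : G) (hg : g ≠ 1) (he : 1 ≤ d 1) (hx : 1 ≤ d g)
    (hd : ∀ y : G, y ≠ 1 → y ≠ g → d y = 0)
    (M N : Matrix G G (Polynomial ℤ))
    (hM : ∀ x y : G,
      M x y = Polynomial.C (d (x * y⁻¹) : ℤ) * Polynomial.X - if x = y then 1 else 0)
    (hN : ∀ x y : G,
      N x y = if y = 1 then (if x = 1 then -1 else 0) else M x y) :
    ((N.det.map (Int.castRingHom ℚ)).eval (1 / (d 1 : ℚ)) = 0 ∧
      (M.det.map (Int.castRingHom ℚ)).eval (1 / (d 1 : ℚ)) ≠ 0) ∧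
    ((1 - Polynomial.C ((d 1 : ℚ)) * Polynomial.X) ∣ N.det.map (Int.castRingHom ℚ) ∧
      ¬ (1 - Polynomial.C ((d 1 : ℚ)) * Polynomial.X) ∣ M.det.map (Int.castRingHom ℚ)) := by
  have ha : (d 1 : ℚ) ≠ 0 := by positivity
  have hb : (d g : ℚ) ≠ 0 := by positivity
  set α : ℚ := 1 / (d 1 : ℚ) with hα
  have haα : (d 1 : ℚ) * α = 1 := mul_one_div_cancel ha
  set ψ : Polynomial ℤ →+* ℚ := eval₂RingHom (Int.castRingHom ℚ) α with hψ
  have key : ∀ A : Matrix G G (Polynomial ℤ),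
      (A.det.map (Int.castRingHom ℚ)).eval α = (A.map ψ).det := by
    intro A
    rw [Polynomial.eval_map]
    exact (RingHom.map_det ψ A)
  have hψM : ∀ x y : G, ψ (M x y) = (d (x * y⁻¹) : ℚ) * α - (if x = y then 1 else 0) := by
    intro x y
    rw [hM x y]
    simp only [hψ, coe_eval₂RingHom, eval₂_sub, eval₂_mul, eval₂_C, eval₂_X]
    congr 1
    split_ifs <;> simp
  -- N evaluated at α has zero row g
  have hNdet : (N.map ψ).det = 0 := by
    apply Matrix.det_eq_zero_of_row_eq_zero g
    intro j
    rw [Matrix.map_apply, hN]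
    by_cases hj1 : j = 1
    · simp [hj1, if_neg hg, hψ]
    · rw [if_neg hj1, hψM]
      by_cases hjg : j = g
      · subst hjg
        simp [haα]
      · have h1 : g * j⁻¹ ≠ 1 := fun h => hjg (mul_inv_eq_one.mp h).symm
        have h2 : g * j⁻¹ ≠ g := fun h => hj1 (inv_eq_one.mp (mul_eq_left.mp h))
        rw [hd _ h1 h2, if_neg (fun h => hjg h.symm)]
        simp
  -- M evaluated at α is (d g / d 1) times a permutation matrix
  set σ : Equiv.Perm G := Equiv.mulLeft g⁻¹ with hσ
  have hperm : ∀ x y : G, σ.permMatrix ℚ x y = if σ x = y then 1 else 0 := by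
    intro x y
    simp [Equiv.Perm.permMatrix, PEquiv.toMatrix_apply, Equiv.toPEquiv, Option.mem_def, eq_comm]
  have hMmap : M.map ψ = ((d g : ℚ) * α) • σ.permMatrix ℚ := by
    ext x y
    rw [Matrix.map_apply, hψM, Matrix.smul_apply, hperm]
    have hσxy : σ x = y ↔ x = g * y := by
      simp only [hσ, Equiv.coe_mulLeft]
      constructor
      · intro h; rw [← h]; group
      · intro h; rw [h]; group
    by_cases hc : x = g * y
    · rw [if_pos (hσxy.mpr hc)]
      have hxy : x ≠ y := by
        intro h
        apply hg
        have hyy : g * y = y := by rw [← hc, h]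
        exact mul_eq_right.mp hyy
      have : x * y⁻¹ = g := by rw [hc]; group
      rw [this, if_neg hxy]
      simp [smul_eq_mul]
    · rw [if_neg (fun h => hc (hσxy.mp h)), smul_zero]
      by_cases hxy : x = y
      · subst hxy
        simp [haα]
      · have h1 : x * y⁻¹ ≠ 1 := fun h => hxy (mul_inv_eq_one.mp h)
        have h2 : x * y⁻¹ ≠ g := fun h => hc (by rw [← h]; group)
        rw [hd _ h1 h2, if_neg hxy]
        simp
  have hMdet : (M.map ψ).det ≠ 0 := by
    rw [hMmap, Matrix.det_smul, Matrix.det_permutation]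
    apply mul_ne_zero
    · exact pow_ne_zero _ (mul_ne_zero hb (by simp [hα, ha]))
    · exact_mod_cast (Equiv.Perm.sign σ).ne_zero
  refine ⟨⟨by rw [key, hNdet], by rw [key]; exact hMdet⟩, ?_, ?_⟩
  · rw [aux_dvd_iff _ ha, key, hNdet]
  · rw [aux_dvd_iff _ ha, key]; exact hMdet
end
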